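/- (Burgunder splitting of a doubly adjoint element.) Let K be a commutative ring which is a ℚ-algebra, Λ a finite type, μ ∈ Λ, and m ≥ 1. Let P ∈ FreeAlgebra K Λ be a Lie polynomial which lies in the K-span of the words of length exactly m. Set x := X_μ. Then in FreeAlgebra K Λ ⊗_K FreeAlgebra K Λ: ∑_{λ∈Λ} X_λ ⊗ 𝔇^L(∂^L_λ(⁅x,⁅x,P⁆⁆)) = (m+2) • (x ⊗ ⁅x,P⁆). -/

import Mathlib

/-
On a Lie polynomial `P` the operator `𝔇^L` agrees with the Euler operator (Dynkin–Specht–Wever):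
`𝔇^L(a b) = adLift(a) 𝔇^L(b) + ε(b) 𝔇^L(a)`, where `adLift` extends `ad ∘ ι` multiplicatively and
`ε = algebraMapInv` is the augmentation, and `adLift = ad`, `ε = 0` on Lie polynomials.
The left derivative obeys `∂_λ(a b) = ∂_λ(a) b + ε(a) ∂_λ(b)`, so with `R = ⁅x, P⁆`,
`∂_λ⁅x, R⁆ = δ_{μλ} (R - P x) + ∂_λ(P) x x`. Now `𝔇^L` kills everything ending in `x x`,
`𝔇^L(R) = (m + 1) R` and `𝔇^L(P x) = -R`, so only `λ = μ` survives, with `(m + 2) R`.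
-/

open scoped TensorProduct

attribute [local instance 100] LieRing.ofAssociativeRing

/-- Left-iterated Lie bracket `[Z₁, …, Z_p]_L` (equal to `Z₁` for a singleton list, `0` for
the empty list). -/
def bracketL {L : Type*} [LieRing L] : List L → L
  | [] => 0
  | [z] => z
  | z :: w :: ws => ⁅z, bracketL (w :: ws)⁆

/-- The word `X_{λ₁} ⋯ X_{λ_p}` given by a list of letters. -/
def word (K : Type*) [CommRing K] {Λ : Type*} (ℓ : List Λ) : FreeAlgebra K Λ :=
  (ℓ.map (FreeAlgebra.ι K)).prod

/-- `𝔇^L`, the `K`-linear map with `𝔇^L(X_{λ₁} ⋯ X_{λ_p}) = [X_{λ₁}, …, X_{λ_p}]_L` and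
`𝔇^L(1) = 0`. -/
noncomputable def DynL (K : Type*) [CommRing K] (Λ : Type*) :
    FreeAlgebra K Λ →ₗ[K] FreeAlgebra K Λ :=
  (FreeAlgebra.basisFreeMonoid K Λ).constr K fun w =>
    bracketL (w.toList.map (FreeAlgebra.ι K))

/-- `∂^L_μ`, the `K`-linear map sending a word starting with `μ` to the word with the first
letter removed, and all other words (and `1`) to `0`. -/
noncomputable def partialL (K : Type*) [CommRing K] {Λ : Type*} [DecidableEq Λ] (μ : Λ) :
    FreeAlgebra K Λ →ₗ[K] FreeAlgebra K Λ :=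
  (FreeAlgebra.basisFreeMonoid K Λ).constr K fun w =>
    if w.toList.head? = some μ then word K w.toList.tail else 0

open FreeAlgebra

section Words

variable {K : Type*} [CommRing K] {Λ : Type*}

@[simp]
lemma word_nil : word K ([] : List Λ) = 1 := rfl

@[simp]
lemma word_cons (a : Λ) (ℓ : List Λ) : word K (a :: ℓ) = ι K a * word K ℓ := by
  simp [word]

lemma word_singleton (a : Λ) : word K [a] = ι K a := by
  simp [word]

lemma word_append (ℓ ℓ' : List Λ) : word K (ℓ ++ ℓ') = word K ℓ * word K ℓ' := by
  simp [word]

lemma basisFreeMonoid_apply (w : FreeMonoid Λ) : basisFreeMonoid K Λ w = word K w.toList := by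
  simp only [basisFreeMonoid, equivMonoidAlgebraFreeMonoid, word, Module.Basis.map_apply,
    Finsupp.coe_basisSingleOne]
  erw [MonoidAlgebra.lift_single]
  rw [one_smul, FreeMonoid.lift_apply]

lemma constr_basisFreeMonoid_word {M : Type*} [AddCommGroup M] [Module K M]
    (f : FreeMonoid Λ → M) (ℓ : List Λ) :
    (basisFreeMonoid K Λ).constr K f (word K ℓ) = f (FreeMonoid.ofList ℓ) := by
  rw [← FreeMonoid.toList_ofList ℓ, ← basisFreeMonoid_apply, Module.Basis.constr_basis,
    FreeMonoid.toList_ofList]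

@[elab_as_elim]
lemma word_induction {p : FreeAlgebra K Λ → Prop} (a : FreeAlgebra K Λ)
    (word : ∀ ℓ, p (word K ℓ)) (add : ∀ a b, p a → p b → p (a + b))
    (smul : ∀ (r : K) a, p a → p (r • a)) : p a := by
  induction (basisFreeMonoid K Λ).mem_span a using Submodule.span_induction with
  | mem _ h => obtain ⟨w, rfl⟩ := h; rw [basisFreeMonoid_apply]; exact word _
  | zero => simpa using smul 0 _ (word [])
  | add a b _ _ ha hb => exact add a b ha hb
  | smul r a _ ha => exact smul r a ha

lemma algebraMapInv_ι (a : Λ) : algebraMapInv (R := K) (ι K a) = 0 :=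
  lift_ι_apply _ _

lemma algebraMapInv_word_cons (a : Λ) (ℓ : List Λ) : algebraMapInv (word K (a :: ℓ)) = 0 := by
  rw [word_cons, map_mul, algebraMapInv_ι, zero_mul]

end Words

section Operators

variable (K : Type*) [CommRing K] (Λ : Type*)

noncomputable def adLift : FreeAlgebra K Λ →ₐ[K] Module.End K (FreeAlgebra K Λ) :=
  lift K fun lam => LieAlgebra.ad K (FreeAlgebra K Λ) (ι K lam)

noncomputable def euler : FreeAlgebra K Λ →ₗ[K] FreeAlgebra K Λ :=
  (basisFreeMonoid K Λ).constr K fun w => w.toList.length • word K w.toList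

variable {K Λ}

lemma adLift_ι (a : Λ) (y : FreeAlgebra K Λ) : adLift K Λ (ι K a) y = ⁅ι K a, y⁆ := by
  rw [adLift, lift_ι_apply, LieAlgebra.ad_apply]

lemma DynL_word (ℓ : List Λ) : DynL K Λ (word K ℓ) = bracketL (ℓ.map (ι K)) :=
  constr_basisFreeMonoid_word _ ℓ

lemma DynL_one : DynL K Λ 1 = 0 :=
  DynL_word []

lemma DynL_ι (a : Λ) : DynL K Λ (ι K a) = ι K a := by
  conv_lhs => rw [← word_singleton, DynL_word]
  rfl

lemma euler_word (ℓ : List Λ) : euler K Λ (word K ℓ) = ℓ.length • word K ℓ :=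
  constr_basisFreeMonoid_word _ ℓ

lemma euler_ι (a : Λ) : euler K Λ (ι K a) = ι K a := by
  rw [← word_singleton, euler_word, List.length_singleton, one_smul]

lemma partialL_one [DecidableEq Λ] (lam : Λ) : partialL K lam 1 = 0 :=
  constr_basisFreeMonoid_word _ []

lemma partialL_word_cons [DecidableEq Λ] (lam a : Λ) (ℓ : List Λ) :
    partialL K lam (word K (a :: ℓ)) = if a = lam then word K ℓ else 0 := by
  rw [partialL, constr_basisFreeMonoid_word]
  simp

lemma partialL_ι [DecidableEq Λ] (lam a : Λ) :
    partialL K lam (ι K a) = if a = lam then 1 else 0 := by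
  rw [← word_singleton, partialL_word_cons, word_nil]

lemma bracketL_cons {L : Type*} [LieRing L] (z : L) {l : List L} (h : l ≠ []) :
    bracketL (z :: l) = ⁅z, bracketL l⁆ := by
  obtain ⟨w, ws, rfl⟩ := List.exists_cons_of_ne_nil h
  rfl

lemma bracketL_map_append (ℓ : List Λ) {ℓ' : List Λ} (h : ℓ' ≠ []) :
    bracketL ((ℓ ++ ℓ').map (ι K)) = adLift K Λ (word K ℓ) (bracketL (ℓ'.map (ι K))) := by
  induction ℓ with
  | nil => simp
  | cons a ℓ ih =>
    rw [List.cons_append, List.map_cons, bracketL_cons _ (by simp [h]), ih, word_cons, map_mul,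
      Module.End.mul_apply, adLift_ι]

lemma DynL_mul (a b : FreeAlgebra K Λ) :
    DynL K Λ (a * b) = adLift K Λ a (DynL K Λ b) + algebraMapInv b • DynL K Λ a := by
  induction b using word_induction with
  | word ℓ' =>
    induction a using word_induction with
    | word ℓ =>
      rcases ℓ' with _ | ⟨c, ℓ'⟩
      · simp [DynL_one]
      · rw [← word_append, DynL_word, DynL_word, bracketL_map_append ℓ (List.cons_ne_nil _ _),
          algebraMapInv_word_cons, zero_smul, add_zero]
    | add a₁ a₂ h₁ h₂ => simp only [add_mul, map_add, h₁, h₂, LinearMap.add_apply, smul_add]; abel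
    | smul r a h =>
      simp only [smul_mul_assoc, map_smul, h, LinearMap.smul_apply, smul_add, smul_comm r]
  | add b₁ b₂ h₁ h₂ => simp only [mul_add, map_add, h₁, h₂, add_smul]; abel
  | smul r b h => simp only [mul_smul_comm, map_smul, h, smul_add, smul_eq_mul, mul_smul]

lemma DynL_mul_ι_mul_ι (b : FreeAlgebra K Λ) (a : Λ) : DynL K Λ (b * ι K a * ι K a) = 0 := by
  rw [DynL_mul, algebraMapInv_ι, zero_smul, add_zero, DynL_ι, map_mul, Module.End.mul_apply,
    adLift_ι, lie_self, map_zero]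

lemma partialL_mul [DecidableEq Λ] (lam : Λ) (a b : FreeAlgebra K Λ) :
    partialL K lam (a * b) = partialL K lam a * b + algebraMapInv a • partialL K lam b := by
  induction a using word_induction with
  | word ℓ =>
    induction b using word_induction with
    | word ℓ' =>
      rcases ℓ with _ | ⟨c, ℓ⟩
      · simp [partialL_one]
      · rw [← word_append, List.cons_append, partialL_word_cons, partialL_word_cons,
          algebraMapInv_word_cons, zero_smul, add_zero, ite_mul, zero_mul, word_append]
    | add b₁ b₂ h₁ h₂ => simp only [mul_add, map_add, h₁, h₂, smul_add]; abel
    | smul r b h => simp only [mul_smul_comm, map_smul, h, smul_add, smul_comm r]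
  | add a₁ a₂ h₁ h₂ => simp only [add_mul, map_add, h₁, h₂, add_smul]; abel
  | smul r a h => simp only [smul_mul_assoc, map_smul, h, smul_add, smul_eq_mul, mul_smul]

lemma euler_mul (a b : FreeAlgebra K Λ) :
    euler K Λ (a * b) = euler K Λ a * b + a * euler K Λ b := by
  induction a using word_induction with
  | word ℓ =>
    induction b using word_induction with
    | word ℓ' =>
      rw [← word_append, euler_word, euler_word, euler_word, word_append, List.length_append,
        add_smul, smul_mul_assoc, mul_smul_comm]
    | add b₁ b₂ h₁ h₂ => simp only [mul_add, map_add, h₁, h₂]; abel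
    | smul r b h => simp only [mul_smul_comm, map_smul, h, smul_add]
  | add a₁ a₂ h₁ h₂ => simp only [add_mul, map_add, h₁, h₂]; abel
  | smul r a h => simp only [smul_mul_assoc, map_smul, h, smul_add]

lemma euler_lie (a b : FreeAlgebra K Λ) :
    euler K Λ ⁅a, b⁆ = ⁅euler K Λ a, b⁆ + ⁅a, euler K Λ b⁆ := by
  simp only [Ring.lie_def, map_sub, euler_mul]
  abel

lemma euler_eq_nsmul_of_mem_span {m : ℕ} {P : FreeAlgebra K Λ}
    (hP : P ∈ Submodule.span K {y | ∃ ℓ : List Λ, ℓ.length = m ∧ y = word K ℓ}) :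
    euler K Λ P = m • P := by
  induction hP using Submodule.span_induction with
  | mem y hy => obtain ⟨ℓ, rfl, rfl⟩ := hy; exact euler_word ℓ
  | zero => simp
  | add x y _ _ hx hy => rw [map_add, hx, hy, smul_add]
  | smul r x _ h => rw [map_smul, h, smul_comm]

end Operators

section LiePolynomials

variable {K : Type*} [CommRing K] {Λ : Type*} {P : FreeAlgebra K Λ}

local notation "lieSpanι" => LieSubalgebra.lieSpan K (FreeAlgebra K Λ) (Set.range (ι K))

lemma adLift_eq_ad_of_mem_lieSpan (hP : P ∈ lieSpanι) :
    adLift K Λ P = LieAlgebra.ad K (FreeAlgebra K Λ) P := by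
  induction hP using LieSubalgebra.lieSpan_induction with
  | mem x hx => obtain ⟨a, rfl⟩ := hx; ext y; exact adLift_ι a y
  | zero => simp
  | add x y _ _ hx hy => simp [hx, hy]
  | smul r x _ h => simp [h]
  | lie x y _ _ hx hy =>
    rw [← AlgHom.coe_toLieHom, LieHom.map_lie, AlgHom.coe_toLieHom, hx, hy, LieHom.map_lie]

lemma algebraMapInv_eq_zero_of_mem_lieSpan (hP : P ∈ lieSpanι) : algebraMapInv P = 0 := by
  induction hP using LieSubalgebra.lieSpan_induction with
  | mem x hx => obtain ⟨a, rfl⟩ := hx; exact algebraMapInv_ι a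
  | zero => simp
  | add x y _ _ hx hy => simp [hx, hy]
  | smul r x _ h => simp [h]
  | lie x y _ _ hx hy => simp [Ring.lie_def, hx, hy]

/-- The Dynkin–Specht–Wever theorem, in the form `𝔇^L = euler` on Lie polynomials. -/
lemma DynL_eq_euler_of_mem_lieSpan (hP : P ∈ lieSpanι) : DynL K Λ P = euler K Λ P := by
  induction hP using LieSubalgebra.lieSpan_induction with
  | mem x hx => obtain ⟨a, rfl⟩ := hx; rw [DynL_ι, euler_ι]
  | zero => simp
  | add x y _ _ hx hy => simp [hx, hy]
  | smul r x _ h => simp [h]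
  | lie x y hx' hy' hx hy =>
    conv_lhs => rw [Ring.lie_def, map_sub, DynL_mul, DynL_mul]
    rw [algebraMapInv_eq_zero_of_mem_lieSpan hx', algebraMapInv_eq_zero_of_mem_lieSpan hy',
      adLift_eq_ad_of_mem_lieSpan hx', adLift_eq_ad_of_mem_lieSpan hy', hx, hy, euler_lie,
      LieAlgebra.ad_apply, LieAlgebra.ad_apply, ← lie_skew (euler K Λ x), zero_smul, zero_smul]
    abel

lemma partialL_lie_ι [DecidableEq Λ] (lam a : Λ) {Q : FreeAlgebra K Λ}
    (hQ : algebraMapInv Q = 0) :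
    partialL K lam ⁅ι K a, Q⁆ = (if a = lam then Q else 0) - partialL K lam Q * ι K a := by
  rw [Ring.lie_def, map_sub, partialL_mul, partialL_mul, partialL_ι, algebraMapInv_ι, hQ,
    zero_smul, zero_smul, add_zero, add_zero, ite_mul, one_mul, zero_mul]

lemma DynL_partialL_lie_ι_lie_ι [DecidableEq Λ] (lam μ : Λ) {m : ℕ} (hP : P ∈ lieSpanι)
    (hPdeg : euler K Λ P = m • P) :
    DynL K Λ (partialL K lam ⁅ι K μ, ⁅ι K μ, P⁆⁆) =
      if μ = lam then (m + 2) • ⁅ι K μ, P⁆ else 0 := by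
  have hR : ⁅ι K μ, P⁆ ∈ lieSpanι :=
    LieSubalgebra.lie_mem _ (LieSubalgebra.subset_lieSpan ⟨μ, rfl⟩) hP
  have hDynR : DynL K Λ ⁅ι K μ, P⁆ = (m + 1) • ⁅ι K μ, P⁆ := by
    rw [DynL_eq_euler_of_mem_lieSpan hR, euler_lie, euler_ι, hPdeg, lie_nsmul]
    module
  have hDynPι : DynL K Λ (P * ι K μ) = -⁅ι K μ, P⁆ := by
    rw [DynL_mul, algebraMapInv_ι, zero_smul, add_zero, DynL_ι,
      adLift_eq_ad_of_mem_lieSpan hP, LieAlgebra.ad_apply, ← lie_skew]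
  rw [partialL_lie_ι _ _ (algebraMapInv_eq_zero_of_mem_lieSpan hR),
    partialL_lie_ι _ _ (algebraMapInv_eq_zero_of_mem_lieSpan hP), sub_mul, map_sub, map_sub,
    DynL_mul_ι_mul_ι, sub_zero]
  split_ifs
  · rw [hDynR, hDynPι]
    module
  · simp

end LiePolynomials

theorem burgunder_splitting_doubly_adjoint_general (K : Type*) [CommRing K]
    (Λ : Type*) [Fintype Λ] [DecidableEq Λ] (μ : Λ) (m : ℕ)
    (P : FreeAlgebra K Λ)
    (hPlie : P ∈ LieSubalgebra.lieSpan K (FreeAlgebra K Λ) (Set.range (FreeAlgebra.ι K)))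
    (hPhom : P ∈ Submodule.span K
      {y : FreeAlgebra K Λ | ∃ ℓ : List Λ, ℓ.length = m ∧ y = word K ℓ}) :
    (∑ lam : Λ,
        FreeAlgebra.ι K lam ⊗ₜ[K]
          DynL K Λ (partialL K lam ⁅FreeAlgebra.ι K μ, ⁅FreeAlgebra.ι K μ, P⁆⁆)) =
      (m + 2) • (FreeAlgebra.ι K μ ⊗ₜ[K] ⁅FreeAlgebra.ι K μ, P⁆) := by
  simp_rw [DynL_partialL_lie_ι_lie_ι _ μ hPlie (euler_eq_nsmul_of_mem_span hPhom),
    TensorProduct.tmul_ite]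
  rw [Finset.sum_ite_eq, if_pos (Finset.mem_univ μ), TensorProduct.tmul_smul]

/-- (Burgunder splitting of a doubly adjoint element.)  If `P` is a Lie polynomial lying in
the span of the words of length `m ≥ 1` and `x = X_μ`, then
`∑_λ X_λ ⊗ 𝔇^L(∂^L_λ ⁅x, ⁅x, P⁆⁆) = (m + 2) • (x ⊗ ⁅x, P⁆)`. -/
theorem burgunder_splitting_doubly_adjoint (K : Type*) [CommRing K] [Algebra ℚ K]
    (Λ : Type*) [Fintype Λ] [DecidableEq Λ] (μ : Λ) (m : ℕ) (hm : 1 ≤ m)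
    (P : FreeAlgebra K Λ)
    (hPlie : P ∈ LieSubalgebra.lieSpan K (FreeAlgebra K Λ) (Set.range (FreeAlgebra.ι K)))
    (hPhom : P ∈ Submodule.span K
      {y : FreeAlgebra K Λ | ∃ ℓ : List Λ, ℓ.length = m ∧ y = word K ℓ}) :
    (∑ lam : Λ,
        FreeAlgebra.ι K lam ⊗ₜ[K]
          DynL K Λ (partialL K lam ⁅FreeAlgebra.ι K μ, ⁅FreeAlgebra.ι K μ, P⁆⁆)) =
      (m + 2) • (FreeAlgebra.ι K μ ⊗ₜ[K] ⁅FreeAlgebra.ι K μ, P⁆) :=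
  burgunder_splitting_doubly_adjoint_general K Λ μ m P hPlie hPhom
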